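/- arXiv:math/0308045 — 2 statements merged into one kernel-verified Lean document; each statement's English description precedes it below -/
import Mathlib

section
/- Let P be a ≥-hereditary graph property and let min P denote the set of induced-subgraph-minimal graphs of P (one per isomorphism class). Then P = ∏_{G ∈ min P} +G, each factor +G is a primitive ≥-hereditary property, this factorisation is minimal, and it is the unique minimal factorisation of P into primitive ≥-hereditary properties: any minimal factorisation of P into primitive ≥-hereditary properties has exactly the set of factors {+G : G ∈ min P}. -/
attribute [local instance] Classical.propDecidable

open SimpleGraph

/-- A finite simple graph, bundled. -/
structure FGraph : Type 1 where
  V : Type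
  [fin : Fintype V]
  graph : SimpleGraph V

attribute [instance] FGraph.fin

namespace FGraph

/-- `G.IsInduced H` : `G` is isomorphic to an induced subgraph of `H`. -/
def IsInduced (G H : FGraph) : Prop := Nonempty (G.graph ↪g H.graph)

/-- `G.IsSub H` : `G` is isomorphic to a subgraph of `H`. -/
def IsSub (G H : FGraph) : Prop := ∃ f : G.graph →g H.graph, Function.Injective f

/-- `G.Iso H` : `G` and `H` are isomorphic. -/
def Iso (G H : FGraph) : Prop := Nonempty (G.graph ≃g H.graph)

/-- The induced subgraph of `G` on a set `s` of vertices. -/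
noncomputable def induce (G : FGraph) (s : Set G.V) : FGraph := ⟨↥s, G.graph.induce s⟩

end FGraph

/-- A class of finite graphs. -/
abbrev GProp : Type 1 := FGraph → Prop

/-- A graph property: a nonempty isomorphism-closed class of finite graphs,
each having at least one vertex. -/
structure IsGProp (P : GProp) : Prop where
  nonempty : ∃ G, P G
  vertexNonempty : ∀ G, P G → Nonempty G.V
  isoClosed : ∀ G H, G.Iso H → P G → P H

namespace GProp

/-- The product `P ∘ Q` of two classes of graphs. -/
def prod (P Q : GProp) : GProp := fun G =>
  Nonempty G.V ∧ ∃ s : Set G.V,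
    (s.Nonempty → P (G.induce s)) ∧ ((sᶜ : Set G.V).Nonempty → Q (G.induce (sᶜ : Set G.V)))

/-- The product `∏ i, Ps i` of an indexed family of classes of graphs:
the vertex set is partitioned into the (possibly empty) preimages of a map
to the index set, and every nonempty part must induce a graph in the
corresponding class. -/
def iProd {I : Type*} (Ps : I → GProp) : GProp := fun G =>
  Nonempty G.V ∧ ∃ f : G.V → I,
    ∀ i, (f ⁻¹' {i}).Nonempty → Ps i (G.induce (f ⁻¹' {i}))

end GProp

/-- Closed under induced subgraphs with at least one vertex. -/
def IndHereditary (P : GProp) : Prop :=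
  ∀ G H : FGraph, P G → H.IsInduced G → Nonempty H.V → P H

/-- Closed under subgraphs with at least one vertex. -/
def Hereditary (P : GProp) : Prop :=
  ∀ G H : FGraph, P G → H.IsSub G → Nonempty H.V → P H

/-- Closed under induced supergraphs. -/
def GeqHereditary (P : GProp) : Prop :=
  ∀ G H : FGraph, P H → H.IsInduced G → P G


/-- The property `+G`: all graphs containing `G` as an induced subgraph. -/
def plusG (G : FGraph) : GProp := fun H => G.IsInduced H

/-- A `≥`-hereditary property `P` is primitive if in every factorisation of `P`
into `≥`-hereditary graph properties, one of the factors equals `P`. -/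
def Primitive (P : GProp) : Prop :=
  ∀ (I : Type 1) (Ps : I → GProp), (∀ i, IsGProp (Ps i)) → (∀ i, GeqHereditary (Ps i)) →
    P = GProp.iProd Ps → ∃ i, Ps i = P

/-- `G` is a `≤`-minimal member of `P`: any member of `P` that is an induced
subgraph of `G` contains `G` back (i.e. is isomorphic to `G`). -/
def MinimalIn (P : GProp) (G : FGraph) : Prop :=
  P G ∧ ∀ H : FGraph, P H → H.IsInduced G → G.IsInduced H

/-- The set of factors `{+G : G ∈ min P}`; since `+G = +G'` exactly when
`G ≅ G'`, this set has one member per isomorphism class of `min P`. -/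
def MinFactors (P : GProp) : Set GProp :=
  {Q | ∃ G : FGraph, MinimalIn P G ∧ Q = plusG G}

section AuxLemmas

namespace FGraph

lemma isInduced_refl (G : FGraph) : G.IsInduced G := ⟨Embedding.refl⟩

lemma isInduced_trans {G H K : FGraph} (h1 : G.IsInduced H) (h2 : H.IsInduced K) :
    G.IsInduced K := ⟨h2.some.comp h1.some⟩

lemma induce_isInduced (G : FGraph) (s : Set G.V) : (G.induce s).IsInduced G :=
  ⟨Embedding.induce s⟩

lemma Iso.symm' {G H : FGraph} (h : G.Iso H) : H.Iso G := ⟨h.some.symm⟩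

lemma Iso.isInduced {G H : FGraph} (h : G.Iso H) : G.IsInduced H :=
  ⟨h.some.toEmbedding⟩

lemma induceUniv_iso (G : FGraph) : (G.induce Set.univ).Iso G :=
  ⟨SimpleGraph.induceUnivIso G.graph⟩

lemma iso_of_mutual {G H : FGraph} (h1 : G.IsInduced H) (h2 : H.IsInduced G) : G.Iso H := by
  obtain ⟨f⟩ := h1
  obtain ⟨g⟩ := h2
  have hcard : Fintype.card G.V = Fintype.card H.V :=
    le_antisymm (Fintype.card_le_of_injective f f.injective)
      (Fintype.card_le_of_injective g g.injective)
  have hbij : Function.Bijective f :=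
    (Fintype.bijective_iff_injective_and_card f).mpr ⟨f.injective, hcard⟩
  exact ⟨RelIso.ofSurjective f hbij.surjective⟩

lemma card_lt_of_not {G H : FGraph} (h1 : H.IsInduced G) (h2 : ¬ G.IsInduced H) :
    Fintype.card H.V < Fintype.card G.V := by
  obtain ⟨f⟩ := h1
  refine lt_of_le_of_ne (Fintype.card_le_of_injective f f.injective) fun hc => h2 ?_
  have hbij : Function.Bijective f :=
    (Fintype.bijective_iff_injective_and_card f).mpr ⟨f.injective, hc⟩
  exact ⟨(RelIso.ofSurjective f hbij.surjective).symm.toRelEmbedding⟩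

end FGraph

lemma exists_minimalIn_aux (P : GProp) :
    ∀ n (G : FGraph), Fintype.card G.V ≤ n → P G →
      ∃ M, MinimalIn P M ∧ M.IsInduced G := by
  intro n
  induction n with
  | zero =>
    intro G hc hG
    by_cases hmin : MinimalIn P G
    · exact ⟨G, hmin, FGraph.isInduced_refl G⟩
    · have hx : ∃ H, P H ∧ H.IsInduced G ∧ ¬ G.IsInduced H := by
        by_contra hno
        push_neg at hno
        exact hmin ⟨hG, fun H hH hHG => hno H hH hHG⟩
      obtain ⟨H, hH, hHG, hGH⟩ := hx
      exact absurd (FGraph.card_lt_of_not hHG hGH) (by omega)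
  | succ n ih =>
    intro G hc hG
    by_cases hmin : MinimalIn P G
    · exact ⟨G, hmin, FGraph.isInduced_refl G⟩
    · have hx : ∃ H, P H ∧ H.IsInduced G ∧ ¬ G.IsInduced H := by
        by_contra hno
        push_neg at hno
        exact hmin ⟨hG, fun H hH hHG => hno H hH hHG⟩
      obtain ⟨H, hH, hHG, hGH⟩ := hx
      have hlt := FGraph.card_lt_of_not hHG hGH
      obtain ⟨M, hM, hMH⟩ := ih H (by omega) hH
      exact ⟨M, hM, FGraph.isInduced_trans hMH hHG⟩

lemma exists_minimalIn (P : GProp) {G : FGraph} (hG : P G) :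
    ∃ M, MinimalIn P M ∧ M.IsInduced G :=
  exists_minimalIn_aux P (Fintype.card G.V) G le_rfl hG

lemma plusG_isGProp {G : FGraph} (h : Nonempty G.V) : IsGProp (plusG G) where
  nonempty := ⟨G, FGraph.isInduced_refl G⟩
  vertexNonempty := fun H hH => by
    obtain ⟨f⟩ := hH
    obtain ⟨v⟩ := h
    exact ⟨f v⟩
  isoClosed := fun A B hiso hA => FGraph.isInduced_trans hA hiso.isInduced

lemma plusG_geqHereditary (G : FGraph) : GeqHereditary (plusG G) :=
  fun _ _ hB hBA => FGraph.isInduced_trans hB hBA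

lemma plusG_eq_of_iso {G H : FGraph} (h : G.Iso H) : plusG G = plusG H := by
  funext K
  apply propext
  exact ⟨fun hK => FGraph.isInduced_trans h.symm'.isInduced hK,
    fun hK => FGraph.isInduced_trans h.isInduced hK⟩

lemma iso_of_plusG_eq {G H : FGraph} (h : plusG G = plusG H) : G.Iso H := by
  have h1 : plusG G H := by rw [h]; exact FGraph.isInduced_refl H
  have h2 : plusG H G := by rw [← h]; exact FGraph.isInduced_refl G
  exact FGraph.iso_of_mutual h1 h2

lemma MinimalIn.of_iso {P : GProp} (hP : IsGProp P) {G H : FGraph}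
    (hG : MinimalIn P G) (h : G.Iso H) : MinimalIn P H := by
  refine ⟨hP.isoClosed G H h hG.1, fun K hK hKH => ?_⟩
  have hKG : K.IsInduced G := FGraph.isInduced_trans hKH h.symm'.isInduced
  exact FGraph.isInduced_trans h.symm'.isInduced (hG.2 K hK hKG)

lemma iProd_of_univ {I : Type*} (Ps : I → GProp) (i : I) {G : FGraph}
    (hne : Nonempty G.V) (h : Ps i (G.induce Set.univ)) : GProp.iProd Ps G := by
  refine ⟨hne, fun _ => i, fun j hj => ?_⟩
  obtain ⟨v, hv⟩ := hj
  have hij : i = j := hv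
  subst hij
  have hs : ((fun _ => i) ⁻¹' {i} : Set G.V) = Set.univ := by
    ext x; simp
  rw [hs]
  exact h

lemma exists_part {I : Type*} {Ps : I → GProp} {G : FGraph} (h : GProp.iProd Ps G) :
    ∃ (i : I) (s : Set G.V), s.Nonempty ∧ Ps i (G.induce s) := by
  obtain ⟨⟨v⟩, f, hf⟩ := h
  exact ⟨f v, f ⁻¹' {f v}, ⟨v, rfl⟩, hf (f v) ⟨v, rfl⟩⟩

lemma factor_mem {I : Type*} {P : GProp} {Ps : I → GProp} (heq : P = GProp.iProd Ps)
    (i : I) (hi : IsGProp (Ps i)) {H : FGraph} (hH : Ps i H) : P H := by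
  rw [heq]
  have hne : Nonempty H.V := hi.vertexNonempty H hH
  exact iProd_of_univ Ps i hne
    (hi.isoClosed H (H.induce Set.univ) (H.induceUniv_iso).symm' hH)

lemma factorise (P : GProp) (hP : IsGProp P) (hgeq : GeqHereditary P) :
    P = GProp.iProd (fun Q : ↥(MinFactors P) => Q.1) := by
  funext G
  apply propext
  constructor
  · intro hG
    have hne := hP.vertexNonempty G hG
    obtain ⟨M, hM, hMG⟩ := exists_minimalIn P hG
    refine iProd_of_univ _ (⟨plusG M, M, hM, rfl⟩ : ↥(MinFactors P)) hne ?_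
    exact FGraph.isInduced_trans hMG (G.induceUniv_iso).symm'.isInduced
  · intro hG
    obtain ⟨⟨Q, M, hM, rfl⟩, s, hs, hmem⟩ := exists_part hG
    exact hgeq G (G.induce s) (hgeq (G.induce s) M hM.1 hmem) (FGraph.induce_isInduced G s)

lemma plusG_primitive {G : FGraph} (hne : Nonempty G.V) : Primitive (plusG G) := by
  intro I Ps hIs hgeqs heq
  have hsub : ∀ i H, Ps i H → plusG G H := fun i H hH => factor_mem heq i (hIs i) hH
  have hG : GProp.iProd Ps G := by rw [← heq]; exact FGraph.isInduced_refl G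
  obtain ⟨i, s, hs, hmem⟩ := exists_part hG
  have h1 : plusG G (G.induce s) := hsub i _ hmem
  have hiso : (G.induce s).Iso G := FGraph.iso_of_mutual (FGraph.induce_isInduced G s) h1
  have hGi : Ps i G := (hIs i).isoClosed _ G hiso hmem
  exact ⟨i, funext fun H => propext ⟨hsub i H, fun hH => hgeqs i H G hGi hH⟩⟩

end AuxLemmas

/-- a `≥`-hereditary graph property `P` satisfies
`P = ∏_{G ∈ min P} +G`; every factor `+G` is a primitive `≥`-hereditary graph
property; this factorisation is minimal; and every minimal factorisation of `P`
into primitive `≥`-hereditary graph properties has exactly the set of factors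
`{+G : G ∈ min P}`. -/
theorem statement_2 (P : GProp) (hP : IsGProp P) (hgeq : GeqHereditary P) :
    P = GProp.iProd (fun Q : ↥(MinFactors P) => Q.1) ∧
    (∀ Q ∈ MinFactors P, IsGProp Q ∧ GeqHereditary Q ∧ Primitive Q) ∧
    (∀ I' : Set ↥(MinFactors P), I' ≠ Set.univ →
      P ≠ GProp.iProd (fun Q : ↥I' => Q.1.1)) ∧
    (∀ (I : Type 1) (Ps : I → GProp),
      (∀ i, IsGProp (Ps i)) → (∀ i, GeqHereditary (Ps i)) → (∀ i, Primitive (Ps i)) →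
      P = GProp.iProd Ps →
      (∀ I' : Set I, I' ≠ Set.univ → P ≠ GProp.iProd (fun i : ↥I' => Ps i.1)) →
      Set.range Ps = MinFactors P) := by
  refine ⟨factorise P hP hgeq, ?_, ?_, ?_⟩
  · rintro Q ⟨G, hG, rfl⟩
    have hne : Nonempty G.V := hP.vertexNonempty G hG.1
    exact ⟨plusG_isGProp hne, plusG_geqHereditary G, plusG_primitive hne⟩
  · intro I' hI' heq'
    obtain ⟨q0, hq0⟩ := (Set.ne_univ_iff_exists_notMem I').mp hI'
    obtain ⟨G0, hG0, hQ0⟩ := q0.2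
    have hG0iP : GProp.iProd (fun Q : ↥I' => Q.1.1) G0 := by rw [← heq']; exact hG0.1
    obtain ⟨⟨q, hq⟩, s, hs, hmem⟩ := exists_part hG0iP
    obtain ⟨G, hGmin, hqeq⟩ := q.2
    have hmem' : plusG G (G0.induce s) := by rw [← hqeq]; exact hmem
    have hGG0 : G.IsInduced G0 :=
      FGraph.isInduced_trans hmem' (FGraph.induce_isInduced G0 s)
    have hG0G : G0.IsInduced G := hG0.2 G hGmin.1 hGG0
    have hqq0 : q = q0 := Subtype.ext (by
      rw [hqeq, hQ0]
      exact plusG_eq_of_iso (FGraph.iso_of_mutual hGG0 hG0G))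
    exact hq0 (hqq0 ▸ hq)
  · intro I Ps hIs hgeqs hprim heqP hminimal
    have hplus : ∀ i, ∃ Gi, MinimalIn (Ps i) Gi ∧ Ps i = plusG Gi := by
      intro i
      have h1 : ∀ Q : ↥(MinFactors (Ps i)), IsGProp Q.1 := by
        rintro ⟨Q, G', hG', rfl⟩
        exact plusG_isGProp ((hIs i).vertexNonempty G' hG'.1)
      have h2 : ∀ Q : ↥(MinFactors (Ps i)), GeqHereditary Q.1 := by
        rintro ⟨Q, G', hG', rfl⟩
        exact plusG_geqHereditary G'
      obtain ⟨⟨Q, Gi, hGi, rfl⟩, hQeq⟩ :=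
        hprim i (↥(MinFactors (Ps i))) (fun Q => Q.1) h1 h2
          (factorise (Ps i) (hIs i) (hgeqs i))
      exact ⟨Gi, hGi, hQeq.symm⟩
    have hsubP : ∀ i H, Ps i H → P H := fun i H hH => factor_mem heqP i (hIs i) hH
    have stepA : ∀ G, MinimalIn P G → ∃ i, Ps i = plusG G := by
      intro G hGmin
      have hG : GProp.iProd Ps G := by rw [← heqP]; exact hGmin.1
      obtain ⟨i, s, hs, hmem⟩ := exists_part hG
      obtain ⟨Gi, hGi, hPsi⟩ := hplus i
      have hsP : P (G.induce s) := hsubP i _ hmem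
      have h1 : G.IsInduced (G.induce s) := hGmin.2 _ hsP (FGraph.induce_isInduced G s)
      have hiso : (G.induce s).Iso G :=
        FGraph.iso_of_mutual (FGraph.induce_isInduced G s) h1
      have hGin : Ps i G := (hIs i).isoClosed _ G hiso hmem
      have hGiG : Gi.IsInduced G := by rw [hPsi] at hGin; exact hGin
      have hGiP : P Gi := hsubP i Gi (by rw [hPsi]; exact FGraph.isInduced_refl Gi)
      have hGGi : G.IsInduced Gi := hGmin.2 Gi hGiP hGiG
      exact ⟨i, by rw [hPsi, plusG_eq_of_iso (FGraph.iso_of_mutual hGiG hGGi)]⟩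
    ext Q
    constructor
    · rintro ⟨i, rfl⟩
      obtain ⟨Gi, hGi, hPsi⟩ := hplus i
      have hGiP : P Gi := hsubP i Gi (by rw [hPsi]; exact FGraph.isInduced_refl Gi)
      by_cases hminGi : MinimalIn P Gi
      · exact ⟨Gi, hminGi, hPsi⟩
      · exfalso
        have hiI' : i ∉ ({j | Ps j ≠ Ps i} : Set I) := fun h => h rfl
        have hIne : ({j | Ps j ≠ Ps i} : Set I) ≠ Set.univ := fun h =>
          hiI' (by rw [h]; trivial)
        apply hminimal {j | Ps j ≠ Ps i} hIne
        funext G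
        apply propext
        constructor
        · intro hG
          obtain ⟨M', hM', hM'G⟩ := exists_minimalIn P hG
          obtain ⟨j, hj⟩ := stepA M' hM'
          have hjI' : Ps j ≠ Ps i := by
            intro heq2
            have hMGi : plusG M' = plusG Gi := by rw [← hj, heq2, hPsi]
            exact hminGi (MinimalIn.of_iso hP hM' (iso_of_plusG_eq hMGi))
          refine iProd_of_univ (fun q : ↥({j | Ps j ≠ Ps i} : Set I) => Ps q.1)
            ⟨j, hjI'⟩ (hP.vertexNonempty G hG) ?_
          show Ps j (G.induce Set.univ)
          rw [hj]
          exact FGraph.isInduced_trans hM'G (G.induceUniv_iso).symm'.isInduced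
        · intro hG
          obtain ⟨⟨j, hj⟩, s, hs, hmem⟩ := exists_part hG
          have hsP : P (G.induce s) := hsubP j _ hmem
          exact hgeq G _ hsP (FGraph.induce_isInduced G s)
    · rintro ⟨G, hGmin, rfl⟩
      exact stepA G hGmin
end

section
/- Let r,s be finite with 2 ≤ r,s < ∞, and suppose O(r)∘K(s) = Q₁∘Q₂ for graph properties Q₁ and Q₂. Then, as an unordered pair, {Q₁,Q₂} = {O(r),K(s)}. -/
attribute [local instance] Classical.propDecidable

open SimpleGraph

/-- `O(r)`: edgeless graphs on at least one and at most `r` vertices. -/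
def Oprop (r : ℕ∞) : GProp := fun G =>
  Nonempty G.V ∧ G.graph = ⊥ ∧ (Fintype.card G.V : ℕ∞) ≤ r

/-- `K(s)`: complete graphs on at least one and at most `s` vertices. -/
def Kprop (s : ℕ∞) : GProp := fun G =>
  Nonempty G.V ∧ G.graph = ⊤ ∧ (Fintype.card G.V : ℕ∞) ≤ s

/-!
A graph lies in `O(r) ∘ K(s)` iff its vertices split into an independent set of at most `r` vertices
and a clique of at most `s` vertices. If `O(r) ∘ K(s) = Q₁ ∘ Q₂`, `G ∈ Q₁` and `H ∈ Q₂`, then every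
graph obtained from `G + H` by adding edges between `G` and `H` has such a split.

If `H` has an edge, every vertex of `G` misses that edge in `G + H`, hence lies on the independent
side of the split: so `Q₁ ⊆ O(r)`. Once `Q₁ ⊆ O(r)` and `Q₂ ⊆ K(s)`, the `Q₁`-part of
`O_{n-1} + K_{s+1}` (for `n ≤ r`) is independent, so it meets `K_{s+1}` at most once, and it leaves
at most `s` vertices: it is `O_n`, so `O(r) ⊆ Q₁`. Complementation turns `O(r) ∘ K(s) = Q₁ ∘ Q₂`
into `O(s) ∘ K(r) = Q₂ᶜ ∘ Q₁ᶜ` and gives the dual statements.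

It remains to find a graph with a non-edge in one factor and a graph with an edge in the other. Both
factors contain a graph on at least two vertices: if all graphs of `Q₂` had one vertex, then `O_r + K_s`
minus at most one vertex would lie in `Q₁`, and re-attaching a vertex to it, either isolated or pendant
at a vertex of `O_r`, would give a graph in `O(r) ∘ K(s)` with `r + 1` isolated vertices or with an
induced `2K₂`, neither of which splits. If such a graph in `Q₁` has a non-edge, the dual of the first
step makes the one in `Q₂` complete; otherwise it is complete and the first step makes the one in `Q₂`
edgeless.
-/

namespace SimpleGraph

variable {V : Type*} {G : SimpleGraph V}

lemma induce_compl (G : SimpleGraph V) (s : Set V) : Gᶜ.induce s = (G.induce s)ᶜ := by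
  ext a b
  simp [Subtype.ext_iff]

lemma induce_eq_bot {s : Set V} : G.induce s = ⊥ ↔ G.IsIndepSet s := by
  rw [← isClique_compl, ← induce_eq_top, induce_compl, compl_eq_top]

lemma IsIndepSet.ncard_add_ncard_le [Finite V] {S K : Set V} (hS : G.IsIndepSet S)
    (hK : G.IsClique K) : S.ncard + K.ncard ≤ Nat.card V + 1 := by
  have hSK : (S ∩ K).ncard ≤ 1 := (Set.ncard_le_one_iff (Set.toFinite _)).2 fun hx hy =>
    by_contra fun hne => hS hx.1 hy.1 hne (hK hx.2 hy.2 hne)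
  have hsub : S ⊆ (S ∩ K) ∪ Kᶜ := fun x hx => by by_cases x ∈ K <;> simp_all
  have := Set.ncard_add_ncard_compl K
  have := (Set.ncard_le_ncard hsub).trans (Set.ncard_union_le _ _)
  omega

structure IsSplit (G : SimpleGraph V) (r s : ℕ) (S : Set V) : Prop where
  indep : G.IsIndepSet S
  clique : G.IsClique Sᶜ
  ncard_le : S.ncard ≤ r
  ncard_compl_le : Sᶜ.ncard ≤ s

namespace IsSplit

variable {r s : ℕ} {S : Set V}

lemma mem_of_not_adj (hS : G.IsSplit r s S) {x y a : V} (hxy : G.Adj x y) (hax : ¬G.Adj a x)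
    (hay : ¬G.Adj a y) : a ∈ S := by
  by_contra ha
  by_cases hx : x ∈ S
  · by_cases hy : y ∈ S
    · exact hS.indep hx hy hxy.ne hxy
    · exact hay (hS.clique ha hy (by rintro rfl; exact hax hxy.symm))
  · exact hax (hS.clique ha hx (by rintro rfl; exact hay hxy))

lemma card_le_of_isolated [Finite V] (hS : G.IsSplit r s S) {I : Set V}
    (hI : ∀ i ∈ I, ∀ x, ¬G.Adj i x) (hr : r < I.ncard) : Nat.card V ≤ r + 1 := by
  obtain ⟨i, hiI, hiS⟩ := Set.not_subset.1 fun hIS : I ⊆ S =>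
    ((Set.ncard_le_ncard hIS).trans hS.ncard_le).not_gt hr
  have hSc : Sᶜ.ncard ≤ 1 := (Set.ncard_le_one_iff (Set.toFinite _)).2 fun {x y} hx hy => by
    by_contra hxy
    by_cases hxi : x = i
    · exact hI i hiI y (hS.clique hiS hy (hxi ▸ hxy))
    · exact hI i hiI x (hS.clique hiS hx (Ne.symm hxi))
  have := Set.ncard_add_ncard_compl S
  have := hS.ncard_le
  omega

end IsSplit

end SimpleGraph

namespace FGraph

@[simp] lemma induce_adj (X : FGraph) (S : Set X.V) {a b : S} :
    (X.induce S).graph.Adj a b ↔ X.graph.Adj a b := Iff.rfl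

lemma card_induce (X : FGraph) (S : Set X.V) : Fintype.card (X.induce S).V = S.ncard := by
  rw [← Nat.card_eq_fintype_card]
  exact Nat.card_coe_set_eq S

abbrev overlay (G H : FGraph) (c : G.V → H.V → Prop) : FGraph :=
  ⟨G.V ⊕ H.V,
    { Adj := fun
        | .inl a, .inl b => G.graph.Adj a b
        | .inr a, .inr b => H.graph.Adj a b
        | .inl a, .inr b => c a b
        | .inr b, .inl a => c a b
      symm := ⟨by rintro (a | a) (b | b) h <;> first | exact h.symm | exact h⟩
      loopless := ⟨by rintro (a | a) h <;> exact (SimpleGraph.irrefl _) h⟩ }⟩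

section Overlay

variable {G H : FGraph} {c : G.V → H.V → Prop}

@[simp] lemma overlay_adj_inl_inl {a b : G.V} :
    (G.overlay H c).graph.Adj (.inl a) (.inl b) ↔ G.graph.Adj a b := Iff.rfl

@[simp] lemma overlay_adj_inr_inr {a b : H.V} :
    (G.overlay H c).graph.Adj (.inr a) (.inr b) ↔ H.graph.Adj a b := Iff.rfl

@[simp] lemma overlay_adj_inl_inr {a : G.V} {b : H.V} :
    (G.overlay H c).graph.Adj (.inl a) (.inr b) ↔ c a b := Iff.rfl

@[simp] lemma overlay_adj_inr_inl {a : G.V} {b : H.V} :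
    (G.overlay H c).graph.Adj (.inr b) (.inl a) ↔ c a b := Iff.rfl

lemma iso_induce_range_inl : G.Iso ((G.overlay H c).induce (Set.range Sum.inl)) :=
  ⟨{ toEquiv := Equiv.ofInjective Sum.inl Sum.inl_injective
     map_rel_iff' := Iff.rfl }⟩

lemma iso_induce_range_inr : H.Iso ((G.overlay H c).induce (Set.range Sum.inr)) :=
  ⟨{ toEquiv := Equiv.ofInjective Sum.inr Sum.inr_injective
     map_rel_iff' := Iff.rfl }⟩

end Overlay

abbrev compl (G : FGraph) : FGraph := ⟨G.V, G.graphᶜ⟩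

@[simp] lemma compl_compl (G : FGraph) : G.compl.compl = G := by
  cases G
  simp only [compl, _root_.compl_compl]

lemma Iso.compl {G H : FGraph} : G.Iso H → G.compl.Iso H.compl
  | ⟨e⟩ => ⟨{ toEquiv := e.toEquiv,
              map_rel_iff' := and_congr e.injective.ne_iff (not_congr e.map_adj_iff) }⟩

lemma iso_of_eq_bot {G H : FGraph} (hG : G.graph = ⊥) (hH : H.graph = ⊥)
    (h : Fintype.card G.V = Fintype.card H.V) : G.Iso H :=
  ⟨{ toEquiv := Fintype.equivOfCardEq h, map_rel_iff' := by simp [hG, hH] }⟩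

lemma compl_induce (X : FGraph) (S : Set X.V) : X.compl.induce S = (X.induce S).compl := by
  simp only [compl, induce, SimpleGraph.induce_compl]
  rfl

end FGraph

lemma isGProp_Oprop {r : ℕ} (hr : 1 ≤ r) : IsGProp (Oprop r) where
  nonempty := ⟨⟨Fin 1, ⊥⟩, ⟨0⟩, rfl, by simpa using hr⟩
  vertexNonempty _ h := h.1
  isoClosed := by
    rintro G H ⟨e⟩ ⟨hne, hbot, hcard⟩
    refine ⟨e.toEquiv.nonempty_congr.1 hne, ?_, by rwa [← Fintype.card_congr e.toEquiv]⟩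
    ext a b
    simp [← e.symm.map_adj_iff, hbot]

namespace GProp

def dual (Q : GProp) : GProp := fun G => Q G.compl

@[simp] lemma dual_dual (Q : GProp) : Q.dual.dual = Q := by
  funext G
  simp [dual]

lemma exists_dual_ne_bot {Q : GProp} (h : ∃ G, Q G ∧ G.graph ≠ ⊤) :
    ∃ G, Q.dual G ∧ G.graph ≠ ⊥ :=
  let ⟨G, hG, hGtop⟩ := h
  ⟨G.compl, by simpa [dual] using hG, by simpa using hGtop⟩

lemma exists_dual_ne_top {Q : GProp} (h : ∃ G, Q G ∧ G.graph ≠ ⊥) :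
    ∃ G, Q.dual G ∧ G.graph ≠ ⊤ :=
  let ⟨G, hG, hGbot⟩ := h
  ⟨G.compl, by simpa [dual] using hG, by simpa using hGbot⟩

lemma dual_mono {P Q : GProp} (h : P ≤ Q) : P.dual ≤ Q.dual := fun G => h G.compl

lemma prod_comm (P Q : GProp) : prod P Q = prod Q P := by
  funext X
  refine propext ⟨?_, ?_⟩ <;>
  · rintro ⟨hne, S, h₁, h₂⟩
    exact ⟨hne, Sᶜ, h₂, by rwa [compl_compl]⟩

lemma prod_dual (P Q : GProp) : (prod P Q).dual = prod P.dual Q.dual := by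
  funext X
  simp [dual, prod, FGraph.compl_induce]

lemma overlay_mem_prod {P Q : GProp} (hP : IsGProp P) (hQ : IsGProp Q) {G H : FGraph}
    (hG : P G) (hH : Q H) (c : G.V → H.V → Prop) : prod P Q (G.overlay H c) := by
  obtain ⟨a⟩ := hP.vertexNonempty G hG
  refine ⟨⟨.inl a⟩, Set.range Sum.inl, fun _ => ?_, fun _ => ?_⟩
  · exact hP.isoClosed _ _ FGraph.iso_induce_range_inl hG
  · rw [Set.compl_range_inl]
    exact hQ.isoClosed _ _ FGraph.iso_induce_range_inr hH

end GProp

lemma IsGProp.dual {Q : GProp} (hQ : IsGProp Q) : IsGProp Q.dual where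
  nonempty := by
    obtain ⟨G, hG⟩ := hQ.nonempty
    exact ⟨G.compl, by simpa [GProp.dual] using hG⟩
  vertexNonempty G hG := hQ.vertexNonempty G.compl hG
  isoClosed G H e := hQ.isoClosed _ _ e.compl

lemma Oprop_dual (r : ℕ∞) : (Oprop r).dual = Kprop r := by
  funext G
  simp [GProp.dual, Oprop, Kprop]

lemma Kprop_dual (s : ℕ∞) : (Kprop s).dual = Oprop s := by
  rw [← Oprop_dual, GProp.dual_dual]

lemma isGProp_Kprop {s : ℕ} (hs : 1 ≤ s) : IsGProp (Kprop s) :=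
  Oprop_dual (s : ℕ∞) ▸ (isGProp_Oprop hs).dual

section Split

variable {r s : ℕ} {X : FGraph} {S : Set X.V}

lemma isIndepSet_and_ncard_le_of_Oprop (h : Oprop r (X.induce S)) :
    X.graph.IsIndepSet S ∧ S.ncard ≤ r := by
  have hcard := h.2.2
  rw [FGraph.card_induce] at hcard
  exact ⟨SimpleGraph.induce_eq_bot.1 h.2.1, by exact_mod_cast hcard⟩

lemma isClique_and_ncard_le_of_Kprop (h : Kprop s (X.induce S)) :
    X.graph.IsClique S ∧ S.ncard ≤ s := by
  have hcard := h.2.2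
  rw [FGraph.card_induce] at hcard
  exact ⟨SimpleGraph.induce_eq_top.1 h.2.1, by exact_mod_cast hcard⟩

lemma isSplit_of_parts (h₁ : S.Nonempty → Oprop r (X.induce S))
    (h₂ : Sᶜ.Nonempty → Kprop s (X.induce Sᶜ)) : X.graph.IsSplit r s S := by
  obtain ⟨hindep, hr⟩ : X.graph.IsIndepSet S ∧ S.ncard ≤ r := by
    rcases S.eq_empty_or_nonempty with rfl | hS
    · simp
    · exact isIndepSet_and_ncard_le_of_Oprop (h₁ hS)
  obtain ⟨hclique, hs⟩ : X.graph.IsClique Sᶜ ∧ Sᶜ.ncard ≤ s := by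
    rcases Sᶜ.eq_empty_or_nonempty with hS | hS
    · simp [hS]
    · exact isClique_and_ncard_le_of_Kprop (h₂ hS)
  exact ⟨hindep, hclique, hr, hs⟩

lemma exists_isSplit_of_mem (h : GProp.prod (Oprop r) (Kprop s) X) : ∃ S, X.graph.IsSplit r s S :=
  let ⟨_, S, h₁, h₂⟩ := h
  ⟨S, isSplit_of_parts h₁ h₂⟩

end Split

section Factorization

variable {r s : ℕ} {Q₁ Q₂ : GProp}

lemma prod_Oprop_Kprop_eq_dual (h : GProp.prod (Oprop r) (Kprop s) = GProp.prod Q₁ Q₂) :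
    GProp.prod (Oprop s) (Kprop r) = GProp.prod Q₂.dual Q₁.dual := by
  rw [GProp.prod_comm Q₂.dual, ← GProp.prod_dual, ← h, GProp.prod_dual, Oprop_dual, Kprop_dual,
    GProp.prod_comm]

theorem le_Oprop_of_exists_ne_bot (hQ₁ : IsGProp Q₁) (hQ₂ : IsGProp Q₂)
    (h : GProp.prod (Oprop r) (Kprop s) = GProp.prod Q₁ Q₂) (hedge : ∃ H, Q₂ H ∧ H.graph ≠ ⊥) :
    Q₁ ≤ Oprop r := by
  obtain ⟨H, hH, hHbot⟩ := hedge
  obtain ⟨x, y, hxy⟩ := SimpleGraph.ne_bot_iff_exists_adj.1 hHbot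
  intro G hG
  obtain ⟨S, hS⟩ := exists_isSplit_of_mem
    (h ▸ GProp.overlay_mem_prod hQ₁ hQ₂ hG hH fun _ _ => False)
  have hinl : ∀ a, Sum.inl a ∈ S := fun a =>
    hS.mem_of_not_adj (x := .inr x) (y := .inr y) hxy (by simp) (by simp)
  have hcard : Nat.card G.V ≤ S.ncard := by
    rw [← Set.ncard_range_of_injective Sum.inl_injective]
    exact Set.ncard_le_ncard (Set.range_subset_iff.2 hinl)
  refine ⟨hQ₁.vertexNonempty G hG, ?_, ?_⟩
  · ext a b
    simp only [SimpleGraph.bot_adj, iff_false]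
    exact fun hab => hS.indep (hinl a) (hinl b) (by simpa using hab.ne) hab
  · rw [← Nat.card_eq_fintype_card]
    exact_mod_cast hcard.trans hS.ncard_le

theorem le_Kprop_of_exists_ne_top (hQ₁ : IsGProp Q₁) (hQ₂ : IsGProp Q₂)
    (h : GProp.prod (Oprop r) (Kprop s) = GProp.prod Q₁ Q₂)
    (hnonedge : ∃ G, Q₁ G ∧ G.graph ≠ ⊤) : Q₂ ≤ Kprop s := by
  have := le_Oprop_of_exists_ne_bot hQ₂.dual hQ₁.dual (prod_Oprop_Kprop_eq_dual h)
    (GProp.exists_dual_ne_bot hnonedge)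
  simpa [Oprop_dual] using GProp.dual_mono this

theorem Oprop_le (hQ₁ : IsGProp Q₁) (hs : 1 ≤ s)
    (h : GProp.prod (Oprop r) (Kprop s) = GProp.prod Q₁ Q₂) (h₁ : Q₁ ≤ Oprop r)
    (h₂ : Q₂ ≤ Kprop s) : Oprop r ≤ Q₁ := by
  intro G hG
  obtain ⟨⟨g₀⟩, hGbot, hGr⟩ := id hG
  have hpos : 0 < Fintype.card G.V := Fintype.card_pos_iff.2 ⟨g₀⟩
  have hr : 1 ≤ r := by
    have : Fintype.card G.V ≤ r := by exact_mod_cast hGr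
    omega
  -- `g₀` and `K_s` span a clique `K` of size `s + 1`, which the independent `Q₁`-part `S` meets at
  -- most once; as `Sᶜ` has at most `s` vertices, `S` has exactly as many vertices as `G`
  obtain ⟨-, S, hS₁, hS₂⟩ : GProp.prod Q₁ Q₂ (G.overlay ⟨Fin s, ⊤⟩ fun g _ => g = g₀) :=
    h ▸ GProp.overlay_mem_prod (isGProp_Oprop hr) (isGProp_Kprop hs) hG
      (show Kprop s ⟨Fin s, ⊤⟩ from ⟨⟨⟨0, hs⟩⟩, rfl, by simp⟩) _
  have hS := isSplit_of_parts (fun hne => h₁ _ (hS₁ hne)) (fun hne => h₂ _ (hS₂ hne))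
  set K : Set (G.V ⊕ Fin s) := insert (.inl g₀) (Set.range .inr)
  have hK : (G.overlay ⟨Fin s, ⊤⟩ fun g _ => g = g₀).graph.IsClique K := by
    rintro (a | a) ha (b | b) hb hab <;> simp_all [K]
  have hKcard : K.ncard = s + 1 := by
    rw [Set.ncard_insert_of_notMem (by simp), Set.ncard_range_of_injective Sum.inr_injective,
      Nat.card_fin]
  have hle := hS.indep.ncard_add_ncard_le hK
  have hsum := Set.ncard_add_ncard_compl S
  have hSc := hS.ncard_compl_le
  simp only [Nat.card_eq_fintype_card, Fintype.card_sum, Fintype.card_fin] at hle hsum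
  have hSn : S.ncard = Fintype.card G.V := by omega
  have hSne : S.Nonempty := Set.nonempty_of_ncard_ne_zero (by omega)
  refine hQ₁.isoClosed _ _ (FGraph.iso_of_eq_bot (SimpleGraph.induce_eq_bot.2 hS.indep) hGbot ?_)
    (hS₁ hSne)
  rw [FGraph.card_induce, hSn]

lemma not_isSplit_overlay_of_isolated {Y W : FGraph} (hW : Fintype.card W.V = 1) {f : Fin r → Y.V}
    (hf : f.Injective) (hiso : ∀ i y, ¬Y.graph.Adj (f i) y) (hY : r < Fintype.card Y.V)
    {S : Set (Y.V ⊕ W.V)} : ¬(Y.overlay W fun _ _ => False).graph.IsSplit r s S := by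
  intro hS
  have hinj : (Sum.map f (id : W.V → W.V)).Injective :=
    Sum.map_injective.2 ⟨hf, Function.injective_id⟩
  have hle := hS.card_le_of_isolated (I := Set.range (Sum.map f id)) ?_
    (by simp [Set.ncard_range_of_injective hinj, hW])
  · simp only [Nat.card_eq_fintype_card, Fintype.card_sum, hW] at hle
    omega
  · rintro _ ⟨i | v, rfl⟩ (y | y)
    · exact hiso i y
    · exact not_false
    · exact not_false
    · rw [Fintype.card_le_one_iff.1 hW.le v y]
      exact SimpleGraph.irrefl _

lemma not_isSplit_overlay_of_adj {Y W : FGraph} (w : W.V) {x y z : Y.V} (hxy : Y.graph.Adj x y)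
    (hzx : ¬Y.graph.Adj z x) (hzy : ¬Y.graph.Adj z y) {S : Set (Y.V ⊕ W.V)} :
    ¬(Y.overlay W fun v _ => v = z).graph.IsSplit r s S := by
  intro hS
  have hz := hS.mem_of_not_adj (x := .inl x) (y := .inl y) (a := .inl z) hxy hzx hzy
  have hw := hS.mem_of_not_adj (x := .inl x) (y := .inl y) (a := .inr w) hxy
    (by rintro rfl; exact hzy hxy) (by rintro rfl; exact hzx hxy.symm)
  exact hS.indep hz hw (by simp) rfl

theorem exists_one_lt_card (hr : 2 ≤ r) (hs : 2 ≤ s) (hQ₁ : IsGProp Q₁) (hQ₂ : IsGProp Q₂)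
    (h : GProp.prod (Oprop r) (Kprop s) = GProp.prod Q₁ Q₂) :
    ∃ H, Q₂ H ∧ 1 < Fintype.card H.V := by
  by_contra! hsmall
  obtain ⟨W, hW⟩ := hQ₂.nonempty
  obtain ⟨w⟩ := hQ₂.vertexNonempty W hW
  have hWcard : Fintype.card W.V = 1 :=
    le_antisymm (hsmall W hW) (Fintype.card_pos_iff.2 ⟨w⟩)
  let X : FGraph := FGraph.overlay ⟨Fin r, ⊥⟩ ⟨Fin s, ⊤⟩ fun _ _ => False
  obtain ⟨-, S, hS₁, hS₂⟩ : GProp.prod Q₁ Q₂ X :=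
    h ▸ GProp.overlay_mem_prod (isGProp_Oprop (by omega)) (isGProp_Kprop (by omega))
      (show Oprop r ⟨Fin r, ⊥⟩ from ⟨⟨⟨0, by omega⟩⟩, rfl, by simp⟩)
      (show Kprop s ⟨Fin s, ⊤⟩ from ⟨⟨⟨0, by omega⟩⟩, rfl, by simp⟩) _
  have hSc : Sᶜ.ncard ≤ 1 := by
    rcases Sᶜ.eq_empty_or_nonempty with hE | hne
    · simp [hE]
    · rw [← FGraph.card_induce]
      exact hsmall _ (hS₂ hne)
  have hsum := Set.ncard_add_ncard_compl S
  simp only [X, Nat.card_eq_fintype_card, Fintype.card_sum, Fintype.card_fin] at hsum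
  have hSne : S.Nonempty := Set.nonempty_of_ncard_ne_zero (by omega)
  have hsplit : ∀ c, ∃ S', ((X.induce S).overlay W c).graph.IsSplit r s S' := fun c =>
    exists_isSplit_of_mem (h ▸ GProp.overlay_mem_prod hQ₁ hQ₂ (hS₁ hSne) hW c)
  by_cases hO : ∀ i, Sum.inl i ∈ S
  · -- attaching `W` to nothing leaves the `r` vertices of `O_r` and `W` isolated
    obtain ⟨S', hS'⟩ := hsplit fun _ _ => False
    refine not_isSplit_overlay_of_isolated hWcard (f := fun i => (⟨.inl i, hO i⟩ : S))
      (fun i j hij => Sum.inl_injective (congrArg Subtype.val hij)) ?_ ?_ hS'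
    · rintro i ⟨y | y, hy⟩ <;> simp [X]
    · rw [FGraph.card_induce]
      omega
  · -- some vertex `i₀` of `O_r` is removed; attaching `W` to another one creates an induced `2K₂`
    obtain ⟨i₀, hi₀⟩ := not_forall.1 hO
    have hmem : ∀ x, x ≠ Sum.inl i₀ → x ∈ S := fun x hx =>
      by_contra fun hxS => hx ((Set.ncard_le_one_iff (Set.toFinite _)).1 hSc hxS hi₀)
    have : Nontrivial (Fin r) := Fin.nontrivial_iff_two_le.2 hr
    have : Nontrivial (Fin s) := Fin.nontrivial_iff_two_le.2 hs
    obtain ⟨i₁, hi₁⟩ := exists_ne i₀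
    obtain ⟨j₀, j₁, hj⟩ := exists_pair_ne (Fin s)
    obtain ⟨S', hS'⟩ := hsplit fun v _ => v = ⟨.inl i₁, hmem _ (by simpa using hi₁)⟩
    refine not_isSplit_overlay_of_adj w (x := (⟨.inr j₀, hmem _ (by simp)⟩ : S))
      (y := (⟨.inr j₁, hmem _ (by simp)⟩ : S)) ?_ ?_ ?_ hS' <;> simp [X, hj]

theorem eq_Oprop (hs : 1 ≤ s) (hQ₁ : IsGProp Q₁) (hQ₂ : IsGProp Q₂)
    (h : GProp.prod (Oprop r) (Kprop s) = GProp.prod Q₁ Q₂)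
    (hnonedge : ∃ G, Q₁ G ∧ G.graph ≠ ⊤) (hedge : ∃ H, Q₂ H ∧ H.graph ≠ ⊥) : Q₁ = Oprop r :=
  have h₁ := le_Oprop_of_exists_ne_bot hQ₁ hQ₂ h hedge
  le_antisymm h₁ (Oprop_le hQ₁ hs h h₁ (le_Kprop_of_exists_ne_top hQ₁ hQ₂ h hnonedge))

theorem eq_Oprop_and_eq_Kprop (hr : 1 ≤ r) (hs : 1 ≤ s) (hQ₁ : IsGProp Q₁) (hQ₂ : IsGProp Q₂)
    (h : GProp.prod (Oprop r) (Kprop s) = GProp.prod Q₁ Q₂)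
    (hnonedge : ∃ G, Q₁ G ∧ G.graph ≠ ⊤) (hedge : ∃ H, Q₂ H ∧ H.graph ≠ ⊥) :
    Q₁ = Oprop r ∧ Q₂ = Kprop s := by
  refine ⟨eq_Oprop hs hQ₁ hQ₂ h hnonedge hedge, ?_⟩
  have := eq_Oprop hr hQ₂.dual hQ₁.dual (prod_Oprop_Kprop_eq_dual h)
    (GProp.exists_dual_ne_top hedge) (GProp.exists_dual_ne_bot hnonedge)
  rw [← Q₂.dual_dual, this, Oprop_dual]

end Factorization

/-- for finite `r, s ≥ 2`, if `O(r) ∘ K(s) = Q₁ ∘ Q₂` for graph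
properties `Q₁, Q₂`, then `{Q₁, Q₂} = {O(r), K(s)}` as an unordered pair. -/
theorem statement_5 (r s : ℕ) (hr : 2 ≤ r) (hs : 2 ≤ s)
    (Q₁ Q₂ : GProp) (hQ₁ : IsGProp Q₁) (hQ₂ : IsGProp Q₂)
    (h : GProp.prod (Oprop (r : ℕ∞)) (Kprop (s : ℕ∞)) = GProp.prod Q₁ Q₂) :
    (Q₁ = Oprop (r : ℕ∞) ∧ Q₂ = Kprop (s : ℕ∞)) ∨
    (Q₁ = Kprop (s : ℕ∞) ∧ Q₂ = Oprop (r : ℕ∞)) := by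
  have h' : GProp.prod (Oprop r) (Kprop s) = GProp.prod Q₂ Q₁ := h.trans (GProp.prod_comm _ _)
  obtain ⟨G, hG, hGcard⟩ := exists_one_lt_card hr hs hQ₂ hQ₁ h'
  obtain ⟨H, hH, hHcard⟩ := exists_one_lt_card hr hs hQ₁ hQ₂ h
  have : Nontrivial G.V := Fintype.one_lt_card_iff_nontrivial.1 hGcard
  have : Nontrivial H.V := Fintype.one_lt_card_iff_nontrivial.1 hHcard
  by_cases hGtop : G.graph = ⊤
  · have hGedge : G.graph ≠ ⊥ := hGtop ▸ top_ne_bot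
    have hHnonedge : H.graph ≠ ⊤ :=
      (le_Oprop_of_exists_ne_bot hQ₂ hQ₁ h' ⟨G, hG, hGedge⟩ H hH).2.1 ▸ bot_ne_top
    exact .inr (eq_Oprop_and_eq_Kprop (by omega) (by omega) hQ₂ hQ₁ h' ⟨H, hH, hHnonedge⟩
      ⟨G, hG, hGedge⟩).symm
  · have hHedge : H.graph ≠ ⊥ :=
      (le_Kprop_of_exists_ne_top hQ₁ hQ₂ h ⟨G, hG, hGtop⟩ H hH).2.1 ▸ top_ne_bot
    exact .inl (eq_Oprop_and_eq_Kprop (by omega) (by omega) hQ₁ hQ₂ h ⟨G, hG, hGtop⟩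
      ⟨H, hH, hHedge⟩)
end
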